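/- arXiv:2104.11191 — 2 statements merged into one kernel-verified Lean document; each statement's English description precedes it below -/
import Mathlib

section
/- Let τ be a rooted binary tree topology on X, let X̄ ⊆ X with |X̄| ≥ 2, and let P be a PCSP support on X̄ such that every PCSP of τ|X̄ belongs to P. Then for every PCSP (t → s) of τ there exist a subsplit a of τ (or the root placeholder ⟨X, ∅⟩) with a path a →* t → s in τ, and a subsplit u of P, such that a|X̄ = u and U(s|X̄) is a child clade of u. Moreover, if s|X̄ is nontrivial, then (u → s|X̄) ∈ P. -/
open Finset

attribute [local instance] Classical.propDecidable

/-- A subsplit on taxa of type `α`: an unordered pair of finite subsets of taxa. -/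
abbrev Subsplit (α : Type*) := Sym2 (Finset α)

/-- A parent-child subsplit pair (PCSP): a pair `(t, s)` of subsplits. -/
abbrev PCSPair (α : Type*) := Subsplit α × Subsplit α

namespace Subsplit

variable {α : Type*} [DecidableEq α]

/-- The parent clade `U(s)` of a subsplit: the union of its two child clades. -/
def clade (s : Subsplit α) : Finset α :=
  Sym2.lift ⟨fun Y Z => Y ∪ Z, fun _ _ => Finset.union_comm _ _⟩ s

/-- A subsplit is valid when its two child clades are disjoint. -/
def Valid (s : Subsplit α) : Prop :=
  Sym2.lift ⟨fun Y Z => Disjoint Y Z, fun _ _ => propext disjoint_comm⟩ s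

/-- A subsplit is nontrivial when both child clades are nonempty. -/
def Nontriv (s : Subsplit α) : Prop :=
  Sym2.lift ⟨fun Y Z => Y.Nonempty ∧ Z.Nonempty, fun _ _ => propext and_comm⟩ s

/-- Restriction of a subsplit to a taxon subset `B`. -/
def restrict (s : Subsplit α) (B : Finset α) : Subsplit α := Sym2.map (fun Y => Y ∩ B) s

end Subsplit

section Defs

variable {α : Type*} [DecidableEq α]

/-- `τ` is a rooted binary tree topology on the clade `W`. -/
structure IsTopology (W : Finset α) (τ : Finset (Subsplit α)) : Prop where
  two_le : 2 ≤ W.card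
  valid : ∀ s ∈ τ, Subsplit.Valid s
  nontriv : ∀ s ∈ τ, Subsplit.Nontriv s
  root : ∃! s, s ∈ τ ∧ Subsplit.clade s = W
  children : ∀ s ∈ τ, ∀ C ∈ s, 2 ≤ C.card → ∃! s', s' ∈ τ ∧ Subsplit.clade s' = C
  parentEx : ∀ s ∈ τ, Subsplit.clade s = W ∨ ∃ t ∈ τ, Subsplit.clade s ∈ t

/-- Restriction of a topology (set of subsplits) to taxon subset `B`:
restrict every subsplit and keep the nontrivial results. -/
noncomputable def restrictT (τ : Finset (Subsplit α)) (B : Finset α) : Finset (Subsplit α) :=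
  (τ.image (fun s => Subsplit.restrict s B)).filter (fun s => Subsplit.Nontriv s)

/-- A subsplit support on taxon set `X'`: a set of valid nontrivial subsplits on `X'`. -/
def IsSupport (X' : Finset α) (S : Set (Subsplit α)) : Prop :=
  ∀ s ∈ S, Subsplit.Valid s ∧ Subsplit.Nontriv s ∧ Subsplit.clade s ⊆ X'

/-- `S(W)`: members of `S` dividing the clade `W`, together with the trivial subsplit `{W, ∅}`. -/
def supportAt (S : Set (Subsplit α)) (W : Finset α) : Set (Subsplit α) :=
  {s | s ∈ S ∧ Subsplit.clade s = W} ∪ {Sym2.mk W (∅ : Finset α)}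

/-- The set `s₁ ⊠ s₂` of the two candidate combinations of two subsplits. -/
def boxTimes (s₁ s₂ : Subsplit α) : Set (Subsplit α) :=
  {s | ∃ Y₁ Z₁ Y₂ Z₂ : Finset α, s₁ = Sym2.mk Y₁ Z₁ ∧ s₂ = Sym2.mk Y₂ Z₂ ∧
    (s = Sym2.mk (Y₁ ∪ Y₂) (Z₁ ∪ Z₂) ∨ s = Sym2.mk (Y₁ ∪ Z₂) (Z₁ ∪ Y₂))}

/-- Reachable clades in the mutual subsplit support construction. -/
inductive ReachClade (S₁ S₂ : Set (Subsplit α)) (X₁ X₂ : Finset α) : Finset α → Prop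
  | root : ReachClade S₁ S₂ X₁ X₂ (X₁ ∪ X₂)
  | step {W : Finset α} {s₁ s₂ s : Subsplit α} {C : Finset α} :
      ReachClade S₁ S₂ X₁ X₂ W →
      s₁ ∈ supportAt S₁ (W ∩ X₁) → s₂ ∈ supportAt S₂ (W ∩ X₂) →
      s ∈ boxTimes s₁ s₂ → Subsplit.Valid s → Subsplit.Nontriv s →
      C ∈ s → 2 ≤ C.card → ReachClade S₁ S₂ X₁ X₂ C

/-- The mutual subsplit support `M(S₁, S₂)`. -/
def mutualSupport (S₁ S₂ : Set (Subsplit α)) (X₁ X₂ : Finset α) : Set (Subsplit α) :=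
  {s | ∃ W s₁ s₂, ReachClade S₁ S₂ X₁ X₂ W ∧
    s₁ ∈ supportAt S₁ (W ∩ X₁) ∧ s₂ ∈ supportAt S₂ (W ∩ X₂) ∧
    s ∈ boxTimes s₁ s₂ ∧ Subsplit.Valid s ∧ Subsplit.Nontriv s}

/-- `(t, s)` is a PCSP on taxon set `X`: `s` is a valid nontrivial subsplit, and `t` is a
subsplit (or the root placeholder `⟨X, ∅⟩`) on `X` having `U(s)` as a child clade. -/
def IsPCSPOn (X : Finset α) (p : PCSPair α) : Prop :=
  Subsplit.Valid p.2 ∧ Subsplit.Nontriv p.2 ∧ Subsplit.Valid p.1 ∧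
    Subsplit.clade p.2 ∈ p.1 ∧ Subsplit.clade p.1 ⊆ X ∧
    (Subsplit.Nontriv p.1 ∨ p.1 = Sym2.mk X (∅ : Finset α))

/-- A PCSP support on taxon set `X'`. -/
def IsPCSPSupport (X' : Finset α) (P : Set (PCSPair α)) : Prop :=
  ∀ p ∈ P, IsPCSPOn X' p

/-- The subsplits of a PCSP support: subsplits occurring in some pair of `P`,
together with the root placeholder `⟨X', ∅⟩`. -/
def subsplitsOfP (X' : Finset α) (P : Set (PCSPair α)) : Set (Subsplit α) :=
  {u | (∃ s, (u, s) ∈ P) ∨ (∃ t, (t, u) ∈ P)} ∪ {Sym2.mk X' (∅ : Finset α)}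

/-- `P(t/W)`: the subsplits `s` with `U(s) = W` and `(t → s) ∈ P`,
together with the trivial subsplit `{W, ∅}`. -/
def pcspSupportAt (P : Set (PCSPair α)) (t : Subsplit α) (W : Finset α) : Set (Subsplit α) :=
  {s | Subsplit.clade s = W ∧ (t, s) ∈ P} ∪ {Sym2.mk W (∅ : Finset α)}

/-- Reachable states `(t/W, t₁/W₁, t₂/W₂)` in the mutual PCSP support construction. -/
inductive ReachState (P₁ P₂ : Set (PCSPair α)) (X₁ X₂ : Finset α) :
    Subsplit α → Finset α → Subsplit α → Finset α → Subsplit α → Finset α → Prop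
  | root : ReachState P₁ P₂ X₁ X₂ (Sym2.mk (X₁ ∪ X₂) (∅ : Finset α)) (X₁ ∪ X₂)
      (Sym2.mk X₁ (∅ : Finset α)) X₁ (Sym2.mk X₂ (∅ : Finset α)) X₂
  | step {t : Subsplit α} {W : Finset α} {t₁ : Subsplit α} {W₁ : Finset α}
      {t₂ : Subsplit α} {W₂ : Finset α} {s₁ s₂ s u₁ u₂ : Subsplit α} {C : Finset α} :
      ReachState P₁ P₂ X₁ X₂ t W t₁ W₁ t₂ W₂ →
      s₁ ∈ pcspSupportAt P₁ t₁ W₁ → s₂ ∈ pcspSupportAt P₂ t₂ W₂ →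
      s ∈ boxTimes s₁ s₂ → Subsplit.Valid s → Subsplit.Nontriv s →
      ((Subsplit.Nontriv s₁ ∧ u₁ = s₁) ∨ (¬ Subsplit.Nontriv s₁ ∧ u₁ = t₁)) →
      ((Subsplit.Nontriv s₂ ∧ u₂ = s₂) ∨ (¬ Subsplit.Nontriv s₂ ∧ u₂ = t₂)) →
      C ∈ s → 2 ≤ C.card →
      ReachState P₁ P₂ X₁ X₂ s C u₁ (C ∩ X₁) u₂ (C ∩ X₂)

/-- The mutual PCSP support `M(P₁, P₂)`. -/
def mutualPCSP (P₁ P₂ : Set (PCSPair α)) (X₁ X₂ : Finset α) : Set (PCSPair α) :=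
  {p | ∃ W t₁ W₁ t₂ W₂ s₁ s₂, ReachState P₁ P₂ X₁ X₂ p.1 W t₁ W₁ t₂ W₂ ∧
    s₁ ∈ pcspSupportAt P₁ t₁ W₁ ∧ s₂ ∈ pcspSupportAt P₂ t₂ W₂ ∧
    p.2 ∈ boxTimes s₁ s₂ ∧ Subsplit.Valid p.2 ∧ Subsplit.Nontriv p.2}

/-- `PathTo M a c`: there is a chain of parent-child pairs of `M` from `a` down to `c`
(possibly empty, when `a = c`). -/
inductive PathTo (M : Set (PCSPair α)) : Subsplit α → Subsplit α → Prop
  | refl (a : Subsplit α) : PathTo M a a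
  | cons {a b c : Subsplit α} : (a, b) ∈ M → PathTo M b c → PathTo M a c

/-- `(t, s)` is a PCSP of the topology `τ` on `X`: `s ∈ τ` and `t` is a member of `τ`
having `U(s)` as a child clade, or the root placeholder `⟨X, ∅⟩` when `U(s) = X`. -/
def IsPCSPOf (X : Finset α) (τ : Finset (Subsplit α)) (t s : Subsplit α) : Prop :=
  s ∈ τ ∧ ((t ∈ τ ∧ Subsplit.clade s ∈ t) ∨
    (Subsplit.clade s = X ∧ t = Sym2.mk X (∅ : Finset α)))

/-- The set of PCSPs of a topology `τ` on `X`. -/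
def pcspSet (X : Finset α) (τ : Finset (Subsplit α)) : Set (PCSPair α) :=
  {p | IsPCSPOf X τ p.1 p.2}

/-- `a` is an ancestor of `s` in `τ`: `a ∈ τ` (or the root placeholder) and `U(s)` is
contained in a child clade of `a`. -/
def IsAncestor (X : Finset α) (τ : Finset (Subsplit α)) (a s : Subsplit α) : Prop :=
  (a ∈ τ ∨ a = Sym2.mk X (∅ : Finset α)) ∧ ∃ C ∈ a, Subsplit.clade s ⊆ C

/-- `d` is a strict descendant of `a`: `U(d)` is contained in a child clade of `a`. -/
def StrictDesc (a d : Subsplit α) : Prop := ∃ C ∈ a, Subsplit.clade d ⊆ C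

/-- `d` is a (valid) descendant of `a`: `d = a`, or `U(d)` is contained in a child clade
of `a`. -/
def Descend (a d : Subsplit α) : Prop := d = a ∨ ∃ C ∈ a, Subsplit.clade d ⊆ C

/-- The parent subsplit of `s` in `τ` (on taxon set `X`): the member of `τ` having `U(s)`
as a child clade if one exists, otherwise the root placeholder `⟨X, ∅⟩`. -/
noncomputable def parentIn (X : Finset α) (τ : Finset (Subsplit α)) (s : Subsplit α) :
    Subsplit α :=
  if h : ∃ t ∈ τ, Subsplit.clade s ∈ t then h.choose else Sym2.mk X (∅ : Finset α)

/-- The finite set of PCSPs of a topology `τ` on `X`. -/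
noncomputable def pcspFinset (X : Finset α) (τ : Finset (Subsplit α)) : Finset (PCSPair α) :=
  τ.image (fun s => (parentIn X τ s, s))

/-- All (valid) subsplits on the taxon set `X`. -/
noncomputable def allSubsplits (X : Finset α) : Finset (Subsplit α) :=
  ((X.powerset ×ˢ X.powerset).image (fun p => Sym2.mk p.1 p.2)).filter (fun s => Subsplit.Valid s)

/-- All nontrivial (valid) subsplits dividing the clade `W`. -/
noncomputable def subsplitsOn (W : Finset α) : Finset (Subsplit α) :=
  (W.powerset.image (fun Y => Sym2.mk Y (W \ Y))).filter (fun s => Subsplit.Nontriv s)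

/-- All nontrivial subsplits whose parent clade is a child clade of `a`. -/
noncomputable def childSubsplits (a : Subsplit α) : Finset (Subsplit α) :=
  Sym2.lift ⟨fun Y Z => subsplitsOn Y ∪ subsplitsOn Z, fun _ _ => Finset.union_comm _ _⟩ a

end Defs

section CCD

variable {α : Type*} [DecidableEq α]

/-- CCD softmax conditional probability `q(s | U(s))`. -/
noncomputable def ccdCond (v : Subsplit α → ℝ) (s : Subsplit α) : ℝ :=
  Real.exp (v s) / ∑ s' ∈ subsplitsOn (Subsplit.clade s), Real.exp (v s')

/-- CCD probability of a topology: `q(τ) = ∏_{s ∈ τ} q(s | U(s))`. -/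
noncomputable def ccdTopProb (v : Subsplit α → ℝ) (τ : Finset (Subsplit α)) : ℝ :=
  ∏ s ∈ τ, ccdCond v s

/-- Unconditional subsplit probability `q(s)`: sum of `q(τ)` over topologies `τ ∈ T`
containing `s`. -/
noncomputable def ccdSubProb (T : Finset (Finset (Subsplit α))) (v : Subsplit α → ℝ)
    (s : Subsplit α) : ℝ :=
  ∑ τ ∈ T.filter (fun τ => s ∈ τ), ccdTopProb v τ

/-- Unconditional clade probability `q(W)`: sum of `q(τ)` over topologies `τ ∈ T` in which
the clade `W` appears (i.e. `W = X` or `W` is a child clade of some subsplit of `τ`). -/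
noncomputable def ccdCladeProb (X : Finset α) (T : Finset (Finset (Subsplit α)))
    (v : Subsplit α → ℝ) (W : Finset α) : ℝ :=
  ∑ τ ∈ T.filter (fun τ => W = X ∨ ∃ s ∈ τ, W ∈ s), ccdTopProb v τ

/-- Fuel-based recursion computing the CCD conditional path probability. -/
noncomputable def ccdPathAux (v : Subsplit α → ℝ) : ℕ → Subsplit α → Subsplit α → ℝ
  | 0, a, d => if d = a then 1 else 0
  | n + 1, a, d => if d = a then 1 else
      ∑ s'' ∈ childSubsplits a, ccdCond v s'' * ccdPathAux v n s'' d

/-- CCD conditional path probability `q(a →* d | a)`: the sum over all descending chains of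
subsplits from `a` to `d` of the product of the conditional probabilities along the chain. -/
noncomputable def ccdPath (v : Subsplit α → ℝ) (a d : Subsplit α) : ℝ :=
  ccdPathAux v ((Subsplit.clade a).card + 1) a d

/-- CCD conditional path probability starting from a clade:
`q(W →* d | W) = Σ_{s'' : U(s'') = W} q(s'' | U(s'')) q(s'' →* d | s'')`. -/
noncomputable def ccdPathFromClade (v : Subsplit α → ℝ) (W : Finset α) (d : Subsplit α) : ℝ :=
  ∑ s'' ∈ subsplitsOn W, ccdCond v s'' * ccdPath v s'' d

end CCD

section SCD

variable {α : Type*} [DecidableEq α]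

/-- SCD softmax conditional probability `q(s | t)`. -/
noncomputable def scdCond (v : PCSPair α → ℝ) (t s : Subsplit α) : ℝ :=
  Real.exp (v (t, s)) / ∑ s'' ∈ subsplitsOn (Subsplit.clade s), Real.exp (v (t, s''))

/-- SCD probability of a topology `τ` on `X`: the product over PCSPs `(t → s)` of `τ` of
`q(s | t)`. -/
noncomputable def scdTopProb (v : PCSPair α → ℝ) (X : Finset α) (τ : Finset (Subsplit α)) : ℝ :=
  ∏ s ∈ τ, scdCond v (parentIn X τ s) s

/-- Unconditional subsplit probability `q(a)` for SCD-parameterized SBNs. -/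
noncomputable def scdSubProb (T : Finset (Finset (Subsplit α))) (v : PCSPair α → ℝ)
    (X : Finset α) (a : Subsplit α) : ℝ :=
  ∑ τ ∈ T.filter (fun τ => a ∈ τ), scdTopProb v X τ

/-- Fuel-based recursion computing the SCD conditional path probability. -/
noncomputable def scdPathAux (v : PCSPair α → ℝ) : ℕ → Subsplit α → Subsplit α → ℝ
  | 0, a, d => if d = a then 1 else 0
  | n + 1, a, d => if d = a then 1 else
      ∑ s'' ∈ childSubsplits a, scdCond v a s'' * scdPathAux v n s'' d

/-- SCD conditional path probability `q(a →* d | a)`. -/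
noncomputable def scdPath (v : PCSPair α → ℝ) (a d : Subsplit α) : ℝ :=
  scdPathAux v ((Subsplit.clade a).card + 1) a d

/-- SCD conditional path probability from a subsplit `t` with designated child clade `W`:
`q(t/W →* d | t/W) = Σ_{s'' : U(s'') = W} q(s'' | t) q(s'' →* d | s'')`. -/
noncomputable def scdPathFrom (v : PCSPair α → ℝ) (t : Subsplit α) (W : Finset α)
    (d : Subsplit α) : ℝ :=
  ∑ s'' ∈ subsplitsOn W, scdCond v t s'' * scdPath v s'' d

/-- Unconditional ancestor-descendant probability `q(a →* d)`: sum of `q(τ)` over topologies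
`τ ∈ T` containing both `a` and `d` with `d` a descendant of `a`. -/
noncomputable def scdPairProb (T : Finset (Finset (Subsplit α))) (v : PCSPair α → ℝ)
    (X : Finset α) (a d : Subsplit α) : ℝ :=
  ∑ τ ∈ T.filter (fun τ => a ∈ τ ∧ d ∈ τ ∧ Descend a d), scdTopProb v X τ

end SCD

/-!
Walk up from `t` in `τ` to the nearest ancestor `a` whose restriction to `Xb` is nontrivial, or
to the root placeholder. Below `a` every restriction is trivial, so `U(s) ∩ Xb` survives intact
and `a|Xb` is its parent in `τ|Xb`; the covering hypothesis then puts `(a|Xb → s|Xb)` into `P`.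
The same walk started at `a` gives `a|Xb` a parent in `τ|Xb`, so `a|Xb` is a subsplit of `P`.
If `U(s)` misses `Xb` altogether, the root placeholder works.
-/

namespace Subsplit

variable {α : Type*}

lemma nontriv_mk {Y Z : Finset α} : Nontriv (Sym2.mk Y Z) ↔ Y.Nonempty ∧ Z.Nonempty := Iff.rfl

variable [DecidableEq α]

lemma clade_mk (Y Z : Finset α) : clade (Sym2.mk Y Z) = Y ∪ Z := rfl

lemma restrict_mk (Y Z B : Finset α) : restrict (Sym2.mk Y Z) B = Sym2.mk (Y ∩ B) (Z ∩ B) :=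
  rfl

lemma clade_restrict (s : Subsplit α) (B : Finset α) : clade (restrict s B) = clade s ∩ B := by
  induction s using Sym2.ind with
  | _ Y Z => rw [restrict_mk, clade_mk, clade_mk, union_inter_distrib_right]

lemma inter_mem_restrict {s : Subsplit α} {C : Finset α} (B : Finset α) (h : C ∈ s) :
    C ∩ B ∈ restrict s B :=
  Sym2.mem_map.mpr ⟨C, h, rfl⟩

lemma restrict_mk_empty {X B : Finset α} (hB : B ⊆ X) :
    restrict (Sym2.mk X ∅) B = Sym2.mk B ∅ := by
  rw [restrict_mk, inter_eq_right.mpr hB, empty_inter]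

lemma Nontriv.clade_nonempty {s : Subsplit α} (h : Nontriv s) : (clade s).Nonempty := by
  induction s using Sym2.ind with
  | _ Y Z => exact h.1.mono subset_union_left

lemma card_lt_card_clade {t : Subsplit α} {C : Finset α} (hv : Valid t) (hn : Nontriv t)
    (hC : C ∈ t) : C.card < (clade t).card := by
  induction t using Sym2.ind with
  | _ Y Z =>
    rw [nontriv_mk] at hn
    rw [clade_mk, card_union_of_disjoint (show Disjoint Y Z from hv)]
    rcases Sym2.mem_iff.mp hC with rfl | rfl
    · have := card_pos.mpr hn.2; omega
    · have := card_pos.mpr hn.1; omega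

lemma clade_inter_eq_of_not_nontriv_restrict {t : Subsplit α} {C B : Finset α} (hC : C ∈ t)
    (htriv : ¬ Nontriv (restrict t B)) (hne : (C ∩ B).Nonempty) : clade t ∩ B = C ∩ B := by
  induction t using Sym2.ind with
  | _ Y Z =>
    rw [restrict_mk, nontriv_mk, not_and_or, not_nonempty_iff_eq_empty,
      not_nonempty_iff_eq_empty] at htriv
    rw [clade_mk, union_inter_distrib_right]
    rcases Sym2.mem_iff.mp hC with rfl | rfl <;> rcases htriv with h | h <;>
      simp_all [nonempty_iff_ne_empty]

end Subsplit

section Topology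

open Subsplit

variable {α : Type*}

lemma PathTo.snoc {M : Set (PCSPair α)} {a b c : Subsplit α} (h : PathTo M a b)
    (hbc : (b, c) ∈ M) : PathTo M a c := by
  induction h with
  | refl a => exact .cons hbc (.refl _)
  | cons hm _ ih => exact .cons hm (ih hbc)

/-- `IsPCSPOf X τ t s` unfolds to `s ∈ τ ∧ IsParentOfClade X τ t (clade s)`. -/
def IsParentOfClade (X : Finset α) (τ : Finset (Subsplit α)) (t : Subsplit α) (C : Finset α) :
    Prop :=
  (t ∈ τ ∧ C ∈ t) ∨ (C = X ∧ t = Sym2.mk X ∅)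

lemma IsParentOfClade.mem {X C : Finset α} {τ : Finset (Subsplit α)} {t : Subsplit α}
    (h : IsParentOfClade X τ t C) : C ∈ t := by
  rcases h with ⟨_, hC⟩ | ⟨rfl, rfl⟩
  exacts [hC, Sym2.mem_mk_left _ _]

lemma IsParentOfClade.mem_or_eq_root {X C : Finset α} {τ : Finset (Subsplit α)}
    {t : Subsplit α} (h : IsParentOfClade X τ t C) : t ∈ τ ∨ t = Sym2.mk X ∅ :=
  h.imp And.left And.right

variable [DecidableEq α]

lemma IsTopology.exists_isPCSPOf {X : Finset α} {τ : Finset (Subsplit α)}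
    (hτ : IsTopology X τ) {s : Subsplit α} (hs : s ∈ τ) : ∃ t, IsPCSPOf X τ t s := by
  rcases hτ.parentEx s hs with h | ⟨t, ht, hmem⟩
  exacts [⟨_, hs, .inr ⟨h, rfl⟩⟩, ⟨t, hs, .inl ⟨ht, hmem⟩⟩]

theorem IsTopology.induction_from_root {X : Finset α} {τ : Finset (Subsplit α)}
    (hτ : IsTopology X τ) {motive : Subsplit α → Prop} (root : motive (Sym2.mk X ∅))
    (step : ∀ t s, IsPCSPOf X τ t s → motive t → motive s) (s : Subsplit α)
    (hs : s ∈ τ ∨ s = Sym2.mk X ∅) : motive s := by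
  rcases hs with hs | rfl
  · obtain ⟨t, hts⟩ := hτ.exists_isPCSPOf hs
    refine step t s hts ?_
    rcases hts.2 with ⟨ht, hmem⟩ | ⟨_, rfl⟩
    · have hlt := card_lt_card_clade (hτ.valid t ht) (hτ.nontriv t ht) hmem
      have hle : (clade t).card ≤ τ.sup (fun r => (clade r).card) :=
        le_sup (f := fun r => (clade r).card) ht
      exact hτ.induction_from_root root step t (.inl ht)
    · exact root
  · exact root
termination_by if s ∈ τ then τ.sup (fun r => (clade r).card) + 1 - (clade s).card else 0
decreasing_by
  simp only [if_pos ht, if_pos hs]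
  omega

theorem IsTopology.pathTo_root {X : Finset α} {τ : Finset (Subsplit α)} (hτ : IsTopology X τ)
    {t : Subsplit α} (ht : t ∈ τ ∨ t = Sym2.mk X ∅) :
    PathTo (pcspSet X τ) (Sym2.mk X ∅) t :=
  hτ.induction_from_root (.refl _) (fun _ _ hts ih => ih.snoc hts) t ht

end Topology

section Restriction

open Subsplit

variable {α : Type*} [DecidableEq α] {X Xb : Finset α} {τ : Finset (Subsplit α)}

lemma mem_restrictT {s : Subsplit α} (hs : s ∈ τ) (hn : Nontriv (restrict s Xb)) :
    restrict s Xb ∈ restrictT τ Xb :=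
  mem_filter.mpr ⟨mem_image_of_mem _ hs, hn⟩

/-- The parent of `C ∩ Xb` in `τ|Xb` is the restriction of the nearest ancestor of `C` whose
restriction is nontrivial: below it, every trivial restriction keeps `C ∩ Xb` as a whole. -/
theorem IsTopology.exists_pathTo_isParentOfClade_restrict (hτ : IsTopology X τ) (hsub : Xb ⊆ X)
    {t : Subsplit α} (ht : t ∈ τ ∨ t = Sym2.mk X ∅) {C : Finset α} (hC : C ∈ t)
    (hne : (C ∩ Xb).Nonempty) :
    ∃ a, PathTo (pcspSet X τ) a t ∧
      IsParentOfClade Xb (restrictT τ Xb) (restrict a Xb) (C ∩ Xb) := by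
  refine hτ.induction_from_root (motive := fun t => ∀ C ∈ t, (C ∩ Xb).Nonempty →
    ∃ a, PathTo (pcspSet X τ) a t ∧
      IsParentOfClade Xb (restrictT τ Xb) (restrict a Xb) (C ∩ Xb)) ?_ ?_ t ht C hC hne
  · intro C hC hne
    rcases Sym2.mem_iff.mp hC with rfl | rfl
    · exact ⟨_, .refl _, .inr ⟨inter_eq_right.mpr hsub, restrict_mk_empty hsub⟩⟩
    · simp at hne
  · intro t' t hts ih C hC hne
    by_cases hn : Nontriv (restrict t Xb)
    · exact ⟨t, .refl t, .inl ⟨mem_restrictT hts.1 hn, inter_mem_restrict Xb hC⟩⟩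
    · have heq := clade_inter_eq_of_not_nontriv_restrict hC hn hne
      have hparent : IsParentOfClade X τ t' (clade t) := hts.2
      obtain ⟨a, hpath, ha⟩ := ih (clade t) hparent.mem (heq ▸ hne)
      exact ⟨a, hpath.snoc hts, heq ▸ ha⟩

theorem IsTopology.exists_isPCSPOf_restrictT (hτ : IsTopology X τ) (hsub : Xb ⊆ X)
    {u : Subsplit α} (hu : u ∈ restrictT τ Xb) : ∃ t, IsPCSPOf Xb (restrictT τ Xb) t u := by
  obtain ⟨hu', hn⟩ := mem_filter.mp hu
  obtain ⟨s, hs, rfl⟩ := mem_image.mp hu'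
  obtain ⟨t, hts⟩ := hτ.exists_isPCSPOf hs
  have hparent : IsParentOfClade X τ t (clade s) := hts.2
  have hne : (clade s ∩ Xb).Nonempty := clade_restrict s Xb ▸ hn.clade_nonempty
  obtain ⟨a, -, ha⟩ :=
    hτ.exists_pathTo_isParentOfClade_restrict hsub hparent.mem_or_eq_root hparent.mem hne
  exact ⟨restrict a Xb, hu, by rwa [clade_restrict]⟩

theorem IsTopology.mem_subsplitsOfP (hτ : IsTopology X τ) (hsub : Xb ⊆ X)
    {P : Set (PCSPair α)}
    (hcover : ∀ t s : Subsplit α, IsPCSPOf Xb (restrictT τ Xb) t s → (t, s) ∈ P)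
    {u : Subsplit α} (hu : u ∈ restrictT τ Xb ∨ u = Sym2.mk Xb ∅) : u ∈ subsplitsOfP Xb P := by
  rcases hu with hu | rfl
  · obtain ⟨t, ht⟩ := hτ.exists_isPCSPOf_restrictT hsub hu
    exact .inl (.inr ⟨t, hcover t u ht⟩)
  · exact .inr rfl

end Restriction

section Statements

variable {α : Type*} [DecidableEq α]

theorem stmt4_general (X Xb : Finset α) (hsub : Xb ⊆ X)
    (τ : Finset (Subsplit α)) (hτ : IsTopology X τ)
    (P : Set (PCSPair α))
    (hcover : ∀ t s : Subsplit α, IsPCSPOf Xb (restrictT τ Xb) t s → (t, s) ∈ P)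
    (t s : Subsplit α) (hts : IsPCSPOf X τ t s) :
    ∃ a u : Subsplit α, PathTo (pcspSet X τ) a t ∧
      u ∈ subsplitsOfP Xb P ∧ Subsplit.restrict a Xb = u ∧
      Subsplit.clade (Subsplit.restrict s Xb) ∈ u ∧
      (Subsplit.Nontriv (Subsplit.restrict s Xb) → (u, Subsplit.restrict s Xb) ∈ P) := by
  open Subsplit in
  obtain ⟨hs, hparent⟩ : s ∈ τ ∧ IsParentOfClade X τ t (clade s) := hts
  rcases (clade s ∩ Xb).eq_empty_or_nonempty with hemp | hne
  · have hrs : clade (restrict s Xb) = ∅ := by rw [clade_restrict, hemp]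
    refine ⟨Sym2.mk X ∅, Sym2.mk Xb ∅, hτ.pathTo_root hparent.mem_or_eq_root, .inr rfl,
      restrict_mk_empty hsub, hrs ▸ Sym2.mem_mk_right _ _, fun hn => ?_⟩
    exact absurd (hrs ▸ hn.clade_nonempty) Finset.not_nonempty_empty
  · obtain ⟨a, hpath, ha⟩ :=
      hτ.exists_pathTo_isParentOfClade_restrict hsub hparent.mem_or_eq_root hparent.mem hne
    rw [← clade_restrict] at ha
    exact ⟨a, restrict a Xb, hpath, hτ.mem_subsplitsOfP hsub hcover ha.mem_or_eq_root, rfl,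
      ha.mem, fun hn => hcover _ _ ⟨mem_restrictT hs hn, ha⟩⟩

theorem stmt4 (X Xb : Finset α) (hsub : Xb ⊆ X) (hXb : 2 ≤ Xb.card)
    (τ : Finset (Subsplit α)) (hτ : IsTopology X τ)
    (P : Set (PCSPair α)) (hP : IsPCSPSupport Xb P)
    (hcover : ∀ t s : Subsplit α, IsPCSPOf Xb (restrictT τ Xb) t s → (t, s) ∈ P)
    (t s : Subsplit α) (hts : IsPCSPOf X τ t s) :
    ∃ a u : Subsplit α, PathTo (pcspSet X τ) a t ∧
      u ∈ subsplitsOfP Xb P ∧ Subsplit.restrict a Xb = u ∧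
      Subsplit.clade (Subsplit.restrict s Xb) ∈ u ∧
      (Subsplit.Nontriv (Subsplit.restrict s Xb) → (u, Subsplit.restrict s Xb) ∈ P) :=
  stmt4_general X Xb hsub τ hτ P hcover t s hts

end Statements
end

section
/- Let T be a finite set of rooted binary tree topologies on X, and let p̂ and q̂ assign strictly positive real numbers to PCSPs (t → s) on X. Define p(τ) = ∏ over PCSPs (t → s) of τ of p̂(t → s), q(τ) = ∏ over PCSPs of τ of q̂(t → s), and p(t → s) = Σ_{τ ∈ T : (t → s) is a PCSP of τ} p(τ). Then −Σ_{τ ∈ T} p(τ) · log(q(τ)/p(τ)) = −Σ_{(t → s)} p(t → s) · (log q̂(t → s) − log p̂(t → s)), where the right-hand sum ranges over all PCSPs occurring in some member of T. (This is the factorization of the Kullback–Leibler divergence between two subsplit-conditional-distribution SBNs, with p̂(t → s) = p(s | t) and q̂(t → s) = q(s | t).) -/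
open Finset

attribute [local instance] Classical.propDecidable

/-!
Taking logarithms turns the products over PCSPs into sums, and exchanging the sum over topologies
with the sum over PCSPs gives the right-hand side. The structural input is that `parentIn` finds
the parent subsplit, i.e. in a topology each subsplit with clade `≠ X` has exactly one parent and
the root has none. The axioms of `IsTopology` only give existence; uniqueness comes from counting
`∑_{t ∈ τ} |U(t)|` over child clades: clades of size `≥ 2` contribute
`∑_u |U(u)| · #parents(u)` and the singletons at least `|X|`, while the root alone accounts for
`|X|` of the total.
-/

namespace Subsplit

variable {α : Type*} [DecidableEq α]

lemma mem_clade_iff {s : Subsplit α} {x : α} : x ∈ s.clade ↔ ∃ C ∈ s, x ∈ C := by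
  induction s using Sym2.ind with
  | _ Y Z => simp [clade, Sym2.mem_iff, or_and_right, exists_or]

lemma subset_clade_of_mem {s : Subsplit α} {C : Finset α} (h : C ∈ s) : C ⊆ s.clade :=
  fun _ hx => mem_clade_iff.2 ⟨C, h, hx⟩

lemma card_lt_card_clade_of_mem {s : Subsplit α} (hv : s.Valid) (hn : s.Nontriv)
    {C : Finset α} (h : C ∈ s) : #C < #s.clade := by
  induction s using Sym2.ind with
  | _ Y Z =>
    simp only [Valid, Nontriv, clade, Sym2.lift_mk] at hv hn ⊢
    rw [card_union_of_disjoint hv]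
    rcases Sym2.mem_iff.1 h with rfl | rfl
    · have := hn.2.card_pos; omega
    · have := hn.1.card_pos; omega

lemma two_le_card_clade {s : Subsplit α} (hv : s.Valid) (hn : s.Nontriv) : 2 ≤ #s.clade := by
  induction s using Sym2.ind with
  | _ Y Z =>
    simp only [Valid, Nontriv, clade, Sym2.lift_mk] at hv hn ⊢
    rw [card_union_of_disjoint hv]
    have := hn.1.card_pos
    have := hn.2.card_pos
    omega

lemma sum_card_toFinset {s : Subsplit α} (hv : s.Valid) (hn : s.Nontriv) :
    ∑ C ∈ s.toFinset, #C = #s.clade := by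
  induction s using Sym2.ind with
  | _ Y Z =>
    simp only [Valid, Nontriv, clade, Sym2.lift_mk] at hv hn ⊢
    have hYZ : Y ≠ Z := by
      rintro rfl
      exact hn.1.ne_empty (disjoint_self.1 hv)
    rw [Sym2.toFinset_mk_eq, sum_pair hYZ, card_union_of_disjoint hv]

end Subsplit

namespace IsTopology

open Subsplit

variable {α : Type*} [DecidableEq α] {X : Finset α} {τ : Finset (Subsplit α)}

lemma clade_subset (hT : IsTopology X τ) {s : Subsplit α} (hs : s ∈ τ) : s.clade ⊆ X := by
  by_contra hsX
  obtain ⟨u, hu, hmax⟩ := (τ.filter fun u => ¬ u.clade ⊆ X).exists_max_image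
    (fun u => #u.clade) ⟨s, mem_filter.2 ⟨hs, hsX⟩⟩
  rw [mem_filter] at hu
  rcases hT.parentEx u hu.1 with huX | ⟨t, ht, hut⟩
  · exact hu.2 huX.le
  · have hle := hmax t <| mem_filter.2
      ⟨ht, fun htX => hu.2 ((subset_clade_of_mem hut).trans htX)⟩
    have hlt := card_lt_card_clade_of_mem (hT.valid t ht) (hT.nontriv t ht) hut
    omega

lemma exists_singleton_mem_of_mem_clade (hT : IsTopology X τ) {s : Subsplit α} (hs : s ∈ τ)
    {x : α} (hx : x ∈ s.clade) : ∃ t ∈ τ, {x} ∈ t := by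
  induction hn : #s.clade using Nat.strong_induction_on generalizing s with
  | _ n ih =>
    obtain ⟨C, hC, hxC⟩ := mem_clade_iff.1 hx
    by_cases h2 : 2 ≤ #C
    · obtain ⟨u, ⟨hu, rfl⟩, -⟩ := hT.children s hs C hC h2
      have hlt := card_lt_card_clade_of_mem (hT.valid s hs) (hT.nontriv s hs) hC
      exact ih _ (hn ▸ hlt) hu hxC rfl
    · have hCx : C = {x} := eq_singleton_iff_unique_mem.2
        ⟨hxC, fun y hy => card_le_one.1 (by omega) y hy x hxC⟩
      exact ⟨s, hs, hCx ▸ hC⟩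

lemma exists_singleton_mem (hT : IsTopology X τ) {x : α} (hx : x ∈ X) :
    ∃ t ∈ τ, {x} ∈ t := by
  obtain ⟨r, ⟨hr, hrX⟩, -⟩ := hT.root
  exact hT.exists_singleton_mem_of_mem_clade hr (hrX ▸ hx)

lemma sum_card_clade_eq_card_add (hT : IsTopology X τ) :
    ∑ u ∈ τ, #u.clade = #X + ∑ u ∈ τ, #u.clade * if u.clade = X then 0 else 1 := by
  obtain ⟨r, hr, hru⟩ := hT.root
  have hroot : τ.filter (fun u => u.clade = X) = {r} :=
    eq_singleton_iff_unique_mem.2 ⟨mem_filter.2 hr, fun u hu => hru u (mem_filter.1 hu)⟩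
  rw [← sum_filter_add_sum_filter_not τ (fun u => u.clade = X), hroot, sum_singleton, hr.2,
    sum_filter]
  simp [mul_ite, ite_not]

lemma sum_card_toFinset_filter_two_le (hT : IsTopology X τ) {t : Subsplit α} (ht : t ∈ τ) :
    ∑ C ∈ t.toFinset.filter (fun C => 2 ≤ #C), #C =
      ∑ u ∈ τ.filter (fun u => u.clade ∈ t), #u.clade := by
  symm
  refine sum_bij (fun u _ => u.clade) (fun u hu => ?_) (fun u hu u' hu' huu' => ?_)
    (fun C hC => ?_) (fun _ _ => rfl)
  · rw [mem_filter] at hu ⊢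
    exact ⟨Sym2.mem_toFinset.2 hu.2, two_le_card_clade (hT.valid u hu.1) (hT.nontriv u hu.1)⟩
  · rw [mem_filter] at hu hu'
    obtain ⟨v, -, hv⟩ := hT.children t ht _ hu.2
      (two_le_card_clade (hT.valid u hu.1) (hT.nontriv u hu.1))
    exact (hv u ⟨hu.1, rfl⟩).trans (hv u' ⟨hu'.1, huu'.symm⟩).symm
  · rw [mem_filter, Sym2.mem_toFinset] at hC
    obtain ⟨u, ⟨hu, huC⟩, -⟩ := hT.children t ht C hC.1 hC.2
    exact ⟨u, mem_filter.2 ⟨hu, huC ▸ hC.1⟩, huC⟩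

lemma sum_card_clade_eq_sum_mul_card_filter_clade_mem_add (hT : IsTopology X τ) :
    ∑ t ∈ τ, #t.clade = ∑ u ∈ τ, #u.clade * #(τ.filter fun t => u.clade ∈ t) +
      ∑ t ∈ τ, ∑ C ∈ t.toFinset.filter (fun C => ¬ 2 ≤ #C), #C := by
  have hsplit : ∀ t ∈ τ, #t.clade = ∑ u ∈ τ.filter (fun u => u.clade ∈ t), #u.clade +
      ∑ C ∈ t.toFinset.filter (fun C => ¬ 2 ≤ #C), #C := fun t ht => by
    rw [← sum_card_toFinset (hT.valid t ht) (hT.nontriv t ht),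
      ← sum_filter_add_sum_filter_not _ (fun C => 2 ≤ #C),
      hT.sum_card_toFinset_filter_two_le ht]
  rw [sum_congr rfl hsplit, sum_add_distrib, add_left_inj]
  simp_rw [sum_filter]
  rw [sum_comm]
  refine sum_congr rfl fun u _ => ?_
  rw [← sum_filter, sum_const, smul_eq_mul, mul_comm]

lemma card_le_sum_card_toFinset_filter_not_two_le (hT : IsTopology X τ) :
    #X ≤ ∑ t ∈ τ, ∑ C ∈ t.toFinset.filter (fun C => ¬ 2 ≤ #C), #C := by
  have hX : X ⊆ τ.biUnion fun t => (t.toFinset.filter fun C => ¬ 2 ≤ #C).biUnion id := by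
    intro x hx
    obtain ⟨t, ht, hxt⟩ := hT.exists_singleton_mem hx
    simp only [mem_biUnion, mem_filter, Sym2.mem_toFinset, id]
    exact ⟨t, ht, {x}, ⟨hxt, by simp⟩, mem_singleton_self x⟩
  calc #X ≤ #(τ.biUnion fun t => (t.toFinset.filter fun C => ¬ 2 ≤ #C).biUnion id) :=
        card_le_card hX
    _ ≤ ∑ t ∈ τ, #((t.toFinset.filter fun C => ¬ 2 ≤ #C).biUnion id) := card_biUnion_le
    _ ≤ _ := sum_le_sum fun t _ => card_biUnion_le

lemma card_filter_clade_mem (hT : IsTopology X τ) {s : Subsplit α} (hs : s ∈ τ) :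
    #(τ.filter fun t => s.clade ∈ t) = if s.clade = X then 0 else 1 := by
  have hle : ∀ u ∈ τ, #u.clade * (if u.clade = X then 0 else 1) ≤
      #u.clade * #(τ.filter fun t => u.clade ∈ t) := fun u hu => by
    refine Nat.mul_le_mul_left _ ?_
    rcases hT.parentEx u hu with huX | ⟨t, ht, hut⟩
    · simp [huX]
    · split_ifs
      · omega
      · exact card_pos.2 ⟨t, mem_filter.2 ⟨ht, hut⟩⟩
  have hge : ∑ u ∈ τ, #u.clade * #(τ.filter fun t => u.clade ∈ t) ≤
      ∑ u ∈ τ, #u.clade * (if u.clade = X then 0 else 1) := by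
    have h₁ := hT.sum_card_clade_eq_sum_mul_card_filter_clade_mem_add
    have h₂ := hT.sum_card_clade_eq_card_add
    have h₃ := hT.card_le_sum_card_toFinset_filter_not_two_le
    omega
  have heq := (sum_eq_sum_iff_of_le hle).1 (le_antisymm (sum_le_sum hle) hge) s hs
  have hpos := two_le_card_clade (hT.valid s hs) (hT.nontriv s hs)
  exact (Nat.eq_of_mul_eq_mul_left (by omega) heq).symm

lemma eq_of_clade_mem (hT : IsTopology X τ) {s t t' : Subsplit α} (hs : s ∈ τ) (ht : t ∈ τ)
    (ht' : t' ∈ τ) (hst : s.clade ∈ t) (hst' : s.clade ∈ t') : t = t' :=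
  card_le_one.1 (by rw [hT.card_filter_clade_mem hs]; split_ifs <;> omega)
    t (mem_filter.2 ⟨ht, hst⟩) t' (mem_filter.2 ⟨ht', hst'⟩)

lemma clade_notMem_of_clade_eq (hT : IsTopology X τ) {s t : Subsplit α} (hs : s ∈ τ)
    (hsX : s.clade = X) (ht : t ∈ τ) : s.clade ∉ t := fun hst => by
  have h := hT.card_filter_clade_mem hs
  rw [if_pos hsX, card_eq_zero, filter_eq_empty_iff] at h
  exact h ht hst

lemma parentIn_eq_of_isPCSPOf (hT : IsTopology X τ) {t s : Subsplit α} (h : IsPCSPOf X τ t s) :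
    parentIn X τ s = t := by
  obtain ⟨hs, ⟨ht, hst⟩ | ⟨hsX, rfl⟩⟩ := h
  · have hex : ∃ t' ∈ τ, s.clade ∈ t' := ⟨t, ht, hst⟩
    rw [parentIn, dif_pos hex]
    exact hT.eq_of_clade_mem hs hex.choose_spec.1 ht hex.choose_spec.2 hst
  · rw [parentIn, dif_neg]
    rintro ⟨t', ht', hst'⟩
    exact hT.clade_notMem_of_clade_eq hs hsX ht' hst'

lemma isPCSPOf_parentIn (hT : IsTopology X τ) {s : Subsplit α} (hs : s ∈ τ) :
    IsPCSPOf X τ (parentIn X τ s) s := by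
  refine ⟨hs, ?_⟩
  by_cases hex : ∃ t ∈ τ, s.clade ∈ t
  · rw [parentIn, dif_pos hex]
    exact Or.inl hex.choose_spec
  · rw [parentIn, dif_neg hex]
    exact Or.inr ⟨(hT.parentEx s hs).resolve_right hex, rfl⟩

lemma mem_pcspFinset_iff (hT : IsTopology X τ) {p : PCSPair α} :
    p ∈ pcspFinset X τ ↔ IsPCSPOf X τ p.1 p.2 := by
  rw [pcspFinset, mem_image]
  constructor
  · rintro ⟨s, hs, rfl⟩
    exact hT.isPCSPOf_parentIn hs
  · intro h
    exact ⟨p.2, h.1, by rw [hT.parentIn_eq_of_isPCSPOf h]⟩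

lemma isPCSPOn_of_mem_pcspFinset (hT : IsTopology X τ) {p : PCSPair α}
    (hp : p ∈ pcspFinset X τ) : IsPCSPOn X p := by
  obtain ⟨hs, ⟨ht, hst⟩ | ⟨hsX, hroot⟩⟩ := hT.mem_pcspFinset_iff.1 hp
  · exact ⟨hT.valid _ hs, hT.nontriv _ hs, hT.valid _ ht, hst, hT.clade_subset ht,
      Or.inl (hT.nontriv _ ht)⟩
  · refine ⟨hT.valid _ hs, hT.nontriv _ hs, ?_, ?_, ?_, Or.inr hroot⟩ <;> rw [hroot]
    · exact disjoint_empty_right X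
    · exact hsX ▸ Sym2.mem_mk_left _ _
    · exact (union_empty X).subset

end IsTopology

lemma Real.log_prod_div_prod {ι : Type*} (s : Finset ι) {f g : ι → ℝ}
    (hf : ∀ i ∈ s, f i ≠ 0) (hg : ∀ i ∈ s, g i ≠ 0) :
    Real.log ((∏ i ∈ s, f i) / ∏ i ∈ s, g i) =
      ∑ i ∈ s, (Real.log (f i) - Real.log (g i)) := by
  rw [Real.log_div (prod_ne_zero_iff.2 hf) (prod_ne_zero_iff.2 hg), Real.log_prod hf,
    Real.log_prod hg, sum_sub_distrib]

lemma Finset.sum_mul_sum_eq_sum_biUnion {ι κ R : Type*} [DecidableEq κ]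
    [NonUnitalNonAssocSemiring R] (T : Finset ι) (P : ι → Finset κ) (w : ι → R)
    (c : κ → R) :
    ∑ i ∈ T, w i * ∑ k ∈ P i, c k =
      ∑ k ∈ T.biUnion P, (∑ i ∈ T.filter (fun i => k ∈ P i), w i) * c k := by
  simp_rw [mul_sum, sum_mul]
  exact sum_comm' fun i k => by simp only [mem_filter, mem_biUnion]; tauto

section Statements

variable {α : Type*} [DecidableEq α]
theorem stmt8 (X : Finset α) (T : Finset (Finset (Subsplit α)))
    (hT : ∀ τ ∈ T, IsTopology X τ)
    (ph qh : PCSPair α → ℝ)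
    (hp : ∀ p : PCSPair α, IsPCSPOn X p → 0 < ph p)
    (hq : ∀ p : PCSPair α, IsPCSPOn X p → 0 < qh p) :
    -(∑ τ ∈ T, (∏ p ∈ pcspFinset X τ, ph p) *
        Real.log ((∏ p ∈ pcspFinset X τ, qh p) / ∏ p ∈ pcspFinset X τ, ph p)) =
    -(∑ p ∈ T.biUnion (fun τ => pcspFinset X τ),
        (∑ τ ∈ T.filter (fun τ => IsPCSPOf X τ p.1 p.2), ∏ p' ∈ pcspFinset X τ, ph p') *
          (Real.log (qh p) - Real.log (ph p))) := by
  have hlog : ∀ τ ∈ T,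
      Real.log ((∏ p ∈ pcspFinset X τ, qh p) / ∏ p ∈ pcspFinset X τ, ph p) =
        ∑ p ∈ pcspFinset X τ, (Real.log (qh p) - Real.log (ph p)) := fun τ hτ =>
    Real.log_prod_div_prod _
      (fun p hpτ => (hq p ((hT τ hτ).isPCSPOn_of_mem_pcspFinset hpτ)).ne')
      (fun p hpτ => (hp p ((hT τ hτ).isPCSPOn_of_mem_pcspFinset hpτ)).ne')
  rw [sum_congr rfl fun τ hτ => by rw [hlog τ hτ], sum_mul_sum_eq_sum_biUnion]
  congr 1
  refine sum_congr rfl fun p _ => ?_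
  rw [filter_congr fun τ hτ => (hT τ hτ).mem_pcspFinset_iff]

end Statements
end
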